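/- arXiv:2601.17511 — 5 statements merged into one kernel-verified Lean document; each statement's English description precedes it below -/
import Mathlib

section
/- Let (X₁,Y₁), …, (Xₙ,Yₙ) be independent bivariate random vectors with Xᵢ ≤_{st:wj} Yᵢ for each i. Then ∑ᵢ Xᵢ ≤_{st:wj} ∑ᵢ Yᵢ. -/
open MeasureTheory ProbabilityTheory Set

/-!
The differences `Dᵢ = Xᵢ - Yᵢ` are independent, and so are `Eᵢ = Yᵢ - Xᵢ`, with `Dᵢ ≤_st Eᵢ`.
The laws of `∑ Dᵢ` and `∑ Eᵢ` are the convolutions of the laws of the summands, and the usual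
stochastic order is preserved by convolution: `(μ ∗ ν)(t, ∞) = ∫ ν(t - x, ∞) dμ(x)` is monotone in
`ν` and, by commutativity of convolution, in `μ`.
-/

lemma MeasureTheory.Measure.conv_apply_Ioi (μ ν : Measure ℝ) [SFinite ν] (t : ℝ) :
    (μ ∗ ν) (Ioi t) = ∫⁻ x, ν (Ioi (t - x)) ∂μ := by
  have hs : MeasurableSet ((fun p : ℝ × ℝ => p.1 + p.2) ⁻¹' Ioi t) :=
    measurable_add measurableSet_Ioi
  rw [Measure.conv, Measure.map_apply measurable_add measurableSet_Ioi, Measure.prod_apply hs]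
  refine lintegral_congr fun x => congrArg ν ?_
  ext y
  simp only [mem_preimage, mem_Ioi]
  constructor <;> intro <;> linarith

/-- The usual stochastic order `μ ≤_st ν`. -/
def StochasticallyLE (μ ν : Measure ℝ) : Prop :=
  ∀ t, μ (Ioi t) ≤ ν (Ioi t)

namespace StochasticallyLE

lemma conv_right {μ ν₁ ν₂ : Measure ℝ} [SFinite ν₁] [SFinite ν₂] (h : StochasticallyLE ν₁ ν₂) :
    StochasticallyLE (μ ∗ ν₁) (μ ∗ ν₂) := fun t => by
  simpa only [Measure.conv_apply_Ioi] using lintegral_mono fun x => h (t - x)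

lemma conv {μ₁ μ₂ ν₁ ν₂ : Measure ℝ} [SFinite μ₁] [SFinite μ₂] [SFinite ν₁] [SFinite ν₂]
    (hμ : StochasticallyLE μ₁ μ₂) (hν : StochasticallyLE ν₁ ν₂) :
    StochasticallyLE (μ₁ ∗ ν₁) (μ₂ ∗ ν₂) := fun t =>
  calc (μ₁ ∗ ν₁) (Ioi t) ≤ (μ₁ ∗ ν₂) (Ioi t) := hν.conv_right t
    _ = (ν₂ ∗ μ₁) (Ioi t) := by rw [Measure.conv_comm]
    _ ≤ (ν₂ ∗ μ₂) (Ioi t) := hμ.conv_right t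
    _ = (μ₂ ∗ ν₂) (Ioi t) := by rw [Measure.conv_comm]

lemma map_iff {Ω Ω' : Type*} [MeasurableSpace Ω] [MeasurableSpace Ω'] {μ : Measure Ω}
    {ν : Measure Ω'} {f : Ω → ℝ} {g : Ω' → ℝ} (hf : Measurable f) (hg : Measurable g) :
    StochasticallyLE (μ.map f) (ν.map g) ↔ ∀ t, μ {ω | f ω > t} ≤ ν {ω | g ω > t} := by
  simp only [StochasticallyLE, Measure.map_apply hf measurableSet_Ioi,
    Measure.map_apply hg measurableSet_Ioi]
  rfl

end StochasticallyLE

lemma ProbabilityTheory.iIndepFun.map_finsetSum_insert {Ω ι : Type*} [MeasurableSpace Ω]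
    {μ : Measure Ω} [IsFiniteMeasure μ] [DecidableEq ι] {D : ι → Ω → ℝ} (hD : iIndepFun D μ)
    (hDm : ∀ i, Measurable (D i)) {s : Finset ι} {j : ι} (hj : j ∉ s) :
    μ.map (∑ i ∈ insert j s, D i) = μ.map (D j) ∗ μ.map (∑ i ∈ s, D i) := by
  rw [Finset.sum_insert hj]
  exact (hD.indepFun_finsetSum_of_notMem hDm hj).symm.map_add_eq_map_conv_map (hDm j)
    (by fun_prop)

lemma stochasticallyLE_map_finsetSum {Ω Ω' ι : Type*} [MeasurableSpace Ω] [MeasurableSpace Ω']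
    {μ : Measure Ω} {ν : Measure Ω'} [IsProbabilityMeasure μ] [IsProbabilityMeasure ν]
    {D : ι → Ω → ℝ} {E : ι → Ω' → ℝ} (hD : iIndepFun D μ) (hE : iIndepFun E ν)
    (hDm : ∀ i, Measurable (D i)) (hEm : ∀ i, Measurable (E i))
    (hDE : ∀ i, StochasticallyLE (μ.map (D i)) (ν.map (E i))) (s : Finset ι) :
    StochasticallyLE (μ.map (∑ i ∈ s, D i)) (ν.map (∑ i ∈ s, E i)) := by
  classical
  induction s using Finset.induction_on with
  | empty => simp [StochasticallyLE, Pi.zero_def, Measure.map_const]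
  | insert j s hj ih =>
    rw [hD.map_finsetSum_insert hDm hj, hE.map_finsetSum_insert hEm hj]
    exact (hDE j).conv ih

/-- Preservation under convolution: for independent bivariate vectors
`(X i, Y i)` with `X i ≤_{st:wj} Y i` for all `i`, we have
`∑ i, X i ≤_{st:wj} ∑ i, Y i`. -/
theorem stwj_convolution {Ω : Type*} [MeasurableSpace Ω] (μ : Measure Ω)
    [IsProbabilityMeasure μ] (n : ℕ) (X Y : Fin n → Ω → ℝ)
    (hXm : ∀ i, Measurable (X i)) (hYm : ∀ i, Measurable (Y i))
    (hindep : iIndepFun (fun i ω => (X i ω, Y i ω)) μ)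
    (h : ∀ i, ∀ t : ℝ, μ {ω | X i ω - Y i ω > t} ≤ μ {ω | Y i ω - X i ω > t}) :
    ∀ t : ℝ,
      μ {ω | (∑ i, X i ω) - (∑ i, Y i ω) > t} ≤
        μ {ω | (∑ i, Y i ω) - (∑ i, X i ω) > t} := by
  have hD : ∀ i, Measurable (X i - Y i) := fun i => (hXm i).sub (hYm i)
  have hE : ∀ i, Measurable (Y i - X i) := fun i => (hYm i).sub (hXm i)
  have hsum := stochasticallyLE_map_finsetSum (D := fun i => X i - Y i) (E := fun i => Y i - X i)
    (hindep.comp (fun _ p => p.1 - p.2) fun _ => measurable_fst.sub measurable_snd)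
    (hindep.comp (fun _ p => p.2 - p.1) fun _ => measurable_snd.sub measurable_fst) hD hE
    (fun i => (StochasticallyLE.map_iff (hD i) (hE i)).2 (h i)) Finset.univ
  rw [StochasticallyLE.map_iff (by fun_prop) (by fun_prop)] at hsum
  simpa only [Finset.sum_apply, Pi.sub_apply, Finset.sum_sub_distrib] using hsum
end

section
/- Let {(X(θ), Y(θ)) : θ ∈ S ⊆ ℝ} be a family of bivariate random vectors and Θ₁, Θ₂ random variables on S. Suppose (1) X(θ) ≤_{st:wj} Y(θ) for all θ, (2) θ ↦ Y(θ) - X(θ) is increasing in the usual stochastic order, and (3) Θ₁ ≤_st Θ₂. Then X(Θ₁) ≤_{st:wj} Y(Θ₂). -/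
/-!
Fix `t` and let `g θ := P(Y θ - X θ > t)`, monotone on `S` by (2); extend it to a monotone
`G : ℝ → ℝ≥0`. By (1) the left side is at most `E[G(Θ₁)]`, and `E[G(Θ₁)] ≤ E[G(Θ₂)]`, which is
the right side. The last inequality follows from (3) via the layer-cake formula, since
`{G > c}` is an upper set of `ℝ`, i.e. empty, everything, or a half-line `Ioi s` or `Ici s`; the
closed half-line is reached from the open ones by continuity from above.
-/

open MeasureTheory Set Filter Topology
open scoped NNReal

theorem IsUpperSet.eq_empty_or_univ_or_Ioi_or_Ici {α : Type*} [ConditionallyCompleteLinearOrder α]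
    {A : Set α} (hA : IsUpperSet A) : A = ∅ ∨ A = univ ∨ ∃ a, A = Ioi a ∨ A = Ici a := by
  rcases A.eq_empty_or_nonempty with rfl | hne
  · exact Or.inl rfl
  by_cases hbdd : BddBelow A
  · refine Or.inr <| Or.inr ⟨sInf A, ?_⟩
    by_cases hmem : sInf A ∈ A
    · exact Or.inr <| Subset.antisymm (fun x hx => csInf_le hbdd hx) fun x hx => hA hx hmem
    · refine Or.inl <| Subset.antisymm (fun x hx => ?_) fun x hx => ?_
      · exact (csInf_le hbdd hx).lt_of_ne (by rintro rfl; exact hmem hx)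
      · obtain ⟨a, ha, hax⟩ := exists_lt_of_csInf_lt hne hx
        exact hA hax.le ha
  · refine Or.inr <| Or.inl <| eq_univ_of_forall fun x => ?_
    obtain ⟨a, ha, hax⟩ := not_bddBelow_iff.1 hbdd x
    exact hA hax.le ha

section StochasticOrder

variable {Ω : Type*} [MeasurableSpace Ω] {ν : Measure Ω} [IsFiniteMeasure ν] {Θ₁ Θ₂ : Ω → ℝ}

theorem measure_preimage_Ici_le_of_forall_Ioi (hΘ₂ : Measurable Θ₂)
    (h : ∀ t, ν (Θ₁ ⁻¹' Ioi t) ≤ ν (Θ₂ ⁻¹' Ioi t)) (s : ℝ) :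
    ν (Θ₁ ⁻¹' Ici s) ≤ ν (Θ₂ ⁻¹' Ici s) := by
  have hIci : Θ₂ ⁻¹' Ici s = ⋂ δ > 0, Θ₂ ⁻¹' Ioi (s - δ) := by
    ext ω
    simp only [mem_preimage, mem_Ici, mem_Ioi, mem_iInter]
    refine ⟨fun hω δ hδ => by linarith, fun hω => le_of_forall_pos_lt_add fun δ hδ => ?_⟩
    linarith [hω δ hδ]
  have hlim : Tendsto (fun δ => ν (Θ₂ ⁻¹' Ioi (s - δ))) (𝓝[>] 0) (𝓝 (ν (Θ₂ ⁻¹' Ici s))) := by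
    rw [hIci]
    refine tendsto_measure_biInter_gt (fun δ _ => (hΘ₂ measurableSet_Ioi).nullMeasurableSet)
      (fun δ δ' _ hδ => preimage_mono (Ioi_subset_Ioi (by linarith)))
      ⟨1, one_pos, measure_ne_top _ _⟩
  refine ge_of_tendsto hlim (eventually_nhdsWithin_of_forall fun δ (hδ : 0 < δ) => ?_)
  calc ν (Θ₁ ⁻¹' Ici s) ≤ ν (Θ₁ ⁻¹' Ioi (s - δ)) :=
        measure_mono (preimage_mono (Ici_subset_Ioi.2 (by linarith)))
    _ ≤ ν (Θ₂ ⁻¹' Ioi (s - δ)) := h _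

theorem measure_preimage_le_of_isUpperSet (hΘ₂ : Measurable Θ₂)
    (h : ∀ t, ν (Θ₁ ⁻¹' Ioi t) ≤ ν (Θ₂ ⁻¹' Ioi t)) {A : Set ℝ} (hA : IsUpperSet A) :
    ν (Θ₁ ⁻¹' A) ≤ ν (Θ₂ ⁻¹' A) := by
  rcases hA.eq_empty_or_univ_or_Ioi_or_Ici with rfl | rfl | ⟨s, rfl | rfl⟩
  · simp
  · simp
  · exact h s
  · exact measure_preimage_Ici_le_of_forall_Ioi hΘ₂ h s

theorem lintegral_comp_le_of_monotone (hΘ₁ : Measurable Θ₁) (hΘ₂ : Measurable Θ₂)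
    (h : ∀ t, ν (Θ₁ ⁻¹' Ioi t) ≤ ν (Θ₂ ⁻¹' Ioi t)) {G : ℝ → ℝ≥0} (hG : Monotone G) :
    ∫⁻ ω, G (Θ₁ ω) ∂ν ≤ ∫⁻ ω, G (Θ₂ ω) ∂ν := by
  have hG' : Monotone fun x => (G x : ℝ) := fun x y hxy => NNReal.coe_le_coe.2 (hG hxy)
  have layer_cake := fun (Θ : Ω → ℝ) (hΘ : Measurable Θ) =>
    lintegral_eq_lintegral_meas_lt ν (f := fun ω => (G (Θ ω) : ℝ))
      (Eventually.of_forall fun ω => (G (Θ ω)).coe_nonneg) (hG'.measurable.comp hΘ).aemeasurable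
  simp only [ENNReal.ofReal_coe_nnreal] at layer_cake
  rw [layer_cake Θ₁ hΘ₁, layer_cake Θ₂ hΘ₂]
  exact lintegral_mono fun c =>
    measure_preimage_le_of_isUpperSet hΘ₂ h fun x y hxy (hx : c < G x) => hx.trans_le (hG' hxy)

theorem integral_comp_le_of_monotone (hΘ₁ : Measurable Θ₁) (hΘ₂ : Measurable Θ₂)
    (h : ∀ t, ν (Θ₁ ⁻¹' Ioi t) ≤ ν (Θ₂ ⁻¹' Ioi t)) {G : ℝ → ℝ≥0} (hG : Monotone G)
    (hint : Integrable (fun ω => (G (Θ₂ ω) : ℝ)) ν) :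
    ∫ ω, (G (Θ₁ ω) : ℝ) ∂ν ≤ ∫ ω, (G (Θ₂ ω) : ℝ) ∂ν := by
  have hlint := lintegral_comp_le_of_monotone hΘ₁ hΘ₂ h hG
  rw [lintegral_coe_eq_integral _ hint] at hlint
  calc ∫ ω, (G (Θ₁ ω) : ℝ) ∂ν ≤ (∫ ω, (G (Θ₂ ω) : ℝ) ∂ν).toNNReal :=
        integral_coe_le_of_lintegral_coe_le hlint
    _ = ∫ ω, (G (Θ₂ ω) : ℝ) ∂ν :=
        Real.coe_toNNReal _ (integral_nonneg fun ω => (G (Θ₂ ω)).coe_nonneg)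

end StochasticOrder

theorem stwj_mixture_general {Ω Ω' : Type*} [MeasurableSpace Ω] [MeasurableSpace Ω']
    (μ : Measure Ω) [IsProbabilityMeasure μ]
    (ν : Measure Ω') [IsProbabilityMeasure ν]
    (S : Set ℝ) (X Y : ℝ → Ω → ℝ) (Θ₁ Θ₂ : Ω' → ℝ)
    (hΘ₁m : Measurable Θ₁) (hΘ₂m : Measurable Θ₂)
    (hΘ₁S : ∀ ω', Θ₁ ω' ∈ S) (hΘ₂S : ∀ ω', Θ₂ ω' ∈ S)
    (h1 : ∀ θ ∈ S, ∀ t : ℝ, μ {ω | X θ ω - Y θ ω > t} ≤ μ {ω | Y θ ω - X θ ω > t})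
    (h2 : ∀ θ₁ ∈ S, ∀ θ₂ ∈ S, θ₁ ≤ θ₂ →
      ∀ t : ℝ, μ {ω | Y θ₁ ω - X θ₁ ω > t} ≤ μ {ω | Y θ₂ ω - X θ₂ ω > t})
    (h3 : ∀ t : ℝ, ν {ω' | Θ₁ ω' > t} ≤ ν {ω' | Θ₂ ω' > t}) :
    ∀ t : ℝ,
      ∫ ω', (μ {ω | X (Θ₁ ω') ω - Y (Θ₁ ω') ω > t}).toReal ∂ν ≤
        ∫ ω', (μ {ω | Y (Θ₂ ω') ω - X (Θ₂ ω') ω > t}).toReal ∂ν := by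
  intro t
  set g : ℝ → ℝ≥0 := fun θ => (μ {ω | Y θ ω - X θ ω > t}).toNNReal
  have hg_mono : MonotoneOn g S := fun a ha b hb hab =>
    ENNReal.toNNReal_mono (measure_ne_top _ _) (h2 a ha b hb hab t)
  have hg_le_one : ∀ θ, g θ ≤ 1 := fun θ => by
    simpa using ENNReal.toNNReal_mono ENNReal.one_ne_top (prob_le_one (μ := μ))
  obtain ⟨G, hG, hgG⟩ := hg_mono.exists_monotone_extension (OrderBot.bddBelow _)
    ⟨1, forall_mem_image.2 fun θ _ => hg_le_one θ⟩
  have hint : ∀ Θ : Ω' → ℝ, Measurable Θ → (∀ ω', Θ ω' ∈ S) →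
      Integrable (fun ω' => (G (Θ ω') : ℝ)) ν := fun Θ hΘ hΘS =>
    .of_bound (hG.measurable.comp hΘ).coe_nnreal_real.aestronglyMeasurable 1 <|
      ae_of_all _ fun ω' => by simpa [← hgG (hΘS ω')] using hg_le_one (Θ ω')
  calc ∫ ω', (μ {ω | X (Θ₁ ω') ω - Y (Θ₁ ω') ω > t}).toReal ∂ν
      ≤ ∫ ω', (G (Θ₁ ω') : ℝ) ∂ν :=
        integral_mono_of_nonneg (ae_of_all _ fun _ => ENNReal.toReal_nonneg) (hint Θ₁ hΘ₁m hΘ₁S) <|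
          ae_of_all _ fun ω' => (ENNReal.toReal_mono (measure_ne_top _ _)
            (h1 _ (hΘ₁S ω') t)).trans_eq (congrArg NNReal.toReal (hgG (hΘ₁S ω')))
    _ ≤ ∫ ω', (G (Θ₂ ω') : ℝ) ∂ν := integral_comp_le_of_monotone hΘ₁m hΘ₂m h3 hG (hint Θ₂ hΘ₂m hΘ₂S)
    _ = ∫ ω', (μ {ω | Y (Θ₂ ω') ω - X (Θ₂ ω') ω > t}).toReal ∂ν :=
        integral_congr_ae <| ae_of_all _ fun ω' => congrArg NNReal.toReal (hgG (hΘ₂S ω')).symm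

/-- Mixtures: let `{(X θ, Y θ) : θ ∈ S}` be a family of bivariate vectors and
`Θ₁, Θ₂` random parameters with values in `S`.  If (1) `X θ ≤_{st:wj} Y θ` for
all `θ ∈ S`, (2) `θ ↦ Y θ - X θ` is increasing in the usual stochastic order on
`S`, and (3) `Θ₁ ≤_st Θ₂`, then `X(Θ₁) ≤_{st:wj} Y(Θ₂)`, i.e. the mixed survival
probabilities are ordered. -/
theorem stwj_mixture {Ω Ω' : Type*} [MeasurableSpace Ω] [MeasurableSpace Ω']
    (μ : Measure Ω) [IsProbabilityMeasure μ]
    (ν : Measure Ω') [IsProbabilityMeasure ν]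
    (S : Set ℝ) (X Y : ℝ → Ω → ℝ) (Θ₁ Θ₂ : Ω' → ℝ)
    (hΘ₁m : Measurable Θ₁) (hΘ₂m : Measurable Θ₂)
    (hΘ₁S : ∀ ω', Θ₁ ω' ∈ S) (hΘ₂S : ∀ ω', Θ₂ ω' ∈ S)
    (h1 : ∀ θ ∈ S, ∀ t : ℝ, μ {ω | X θ ω - Y θ ω > t} ≤ μ {ω | Y θ ω - X θ ω > t})
    (h2 : ∀ θ₁ ∈ S, ∀ θ₂ ∈ S, θ₁ ≤ θ₂ →
      ∀ t : ℝ, μ {ω | Y θ₁ ω - X θ₁ ω > t} ≤ μ {ω | Y θ₂ ω - X θ₂ ω > t})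
    (h3 : ∀ t : ℝ, ν {ω' | Θ₁ ω' > t} ≤ ν {ω' | Θ₂ ω' > t})
    (hmeas₁ : ∀ t : ℝ, Measurable fun ω' => (μ {ω | X (Θ₁ ω') ω - Y (Θ₁ ω') ω > t}).toReal)
    (hmeas₂ : ∀ t : ℝ, Measurable fun ω' => (μ {ω | Y (Θ₂ ω') ω - X (Θ₂ ω') ω > t}).toReal) :
    ∀ t : ℝ,
      ∫ ω', (μ {ω | X (Θ₁ ω') ω - Y (Θ₁ ω') ω > t}).toReal ∂ν ≤
        ∫ ω', (μ {ω | Y (Θ₂ ω') ω - X (Θ₂ ω') ω > t}).toReal ∂ν :=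
  stwj_mixture_general μ ν S X Y Θ₁ Θ₂ hΘ₁m hΘ₂m hΘ₁S hΘ₂S h1 h2 h3
end

section
/- Let {(Xₙ, Yₙ)} be a sequence of bivariate random vectors converging in distribution to (X,Y). If Xₙ ≤_{st:wj} Yₙ for all n, then X ≤_{st:wj} Y. -/
open MeasureTheory ProbabilityTheory Filter

/-!
Write `D = X - Y`. The hypothesis says that the law of `Dₙ` is stochastically dominated by the law
of `-Dₙ`. Both sequences converge in distribution (continuous mapping theorem), and the usual
stochastic order survives weak limits: by the portmanteau theorem, for the open set `(t, ∞)` and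
the closed set `[t, ∞)`,
`P(D > t) ≤ liminf P(Dₙ > t) ≤ liminf P(-Dₙ > t) ≤ limsup P(-Dₙ ≥ t) ≤ P(-D ≥ t)`,
and exhausting `(t, ∞)` by the sets `[s, ∞)`, `s ↓ t`, turns `≥` back into `>`.
-/

open Set Topology BoundedContinuousFunction

namespace MeasureTheory

section StochasticOrder

variable {α : Type*} [LinearOrder α] [TopologicalSpace α] [OrderTopology α] [MeasurableSpace α]

lemma measure_Ioi_le_of_forall_measure_Ioi_le_measure_Ici [DenselyOrdered α] [NoMaxOrder α]
    [FirstCountableTopology α] {ν ν' : Measure α} (h : ∀ s, ν (Ioi s) ≤ ν' (Ici s)) (t : α) :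
    ν (Ioi t) ≤ ν' (Ioi t) := by
  obtain ⟨u, hu_anti, hu_gt, hu_lim⟩ := exists_seq_strictAnti_tendsto t
  have hunion : ⋃ n, Ioi (u n) = Ioi t :=
    (isGLB_of_tendsto_atTop hu_anti.antitone hu_lim).iUnion_Ioi_eq
  have hmono : Monotone fun n => Ioi (u n) := fun m n hmn => Ioi_subset_Ioi (hu_anti.antitone hmn)
  rw [← hunion, hmono.measure_iUnion, hunion]
  exact iSup_le fun n => (h (u n)).trans (measure_mono (Ici_subset_Ioi.2 (hu_gt n)))

variable [OpensMeasurableSpace α] [HasOuterApproxClosed α] {ι : Type*} {l : Filter ι} [l.NeBot]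
  {ν ν' : ProbabilityMeasure α} {νs νs' : ι → ProbabilityMeasure α}

lemma ProbabilityMeasure.measure_Ioi_le_measure_Ici_of_tendsto (hν : Tendsto νs l (𝓝 ν))
    (hν' : Tendsto νs' l (𝓝 ν')) {t : α}
    (h : ∀ᶠ i in l, (νs i : Measure α) (Ioi t) ≤ (νs' i : Measure α) (Ioi t)) :
    (ν : Measure α) (Ioi t) ≤ (ν' : Measure α) (Ici t) :=
  calc (ν : Measure α) (Ioi t)
      ≤ l.liminf fun i => (νs i : Measure α) (Ioi t) :=
        ProbabilityMeasure.le_liminf_measure_open_of_tendsto hν isOpen_Ioi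
    _ ≤ l.liminf fun i => (νs' i : Measure α) (Ici t) :=
        liminf_le_liminf (h.mono fun i hi => hi.trans (measure_mono Ioi_subset_Ici_self))
    _ ≤ l.limsup fun i => (νs' i : Measure α) (Ici t) := liminf_le_limsup
    _ ≤ (ν' : Measure α) (Ici t) :=
        ProbabilityMeasure.limsup_measure_closed_le_of_tendsto hν' isClosed_Ici

lemma ProbabilityMeasure.measure_Ioi_le_of_tendsto [DenselyOrdered α] [NoMaxOrder α]
    [FirstCountableTopology α] (hν : Tendsto νs l (𝓝 ν)) (hν' : Tendsto νs' l (𝓝 ν'))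
    (h : ∀ t, ∀ᶠ i in l, (νs i : Measure α) (Ioi t) ≤ (νs' i : Measure α) (Ioi t)) (t : α) :
    (ν : Measure α) (Ioi t) ≤ (ν' : Measure α) (Ioi t) :=
  measure_Ioi_le_of_forall_measure_Ioi_le_measure_Ici
    (fun s => measure_Ioi_le_measure_Ici_of_tendsto hν hν' (h s)) t

end StochasticOrder

section Distribution

variable {ι Ω' : Type*} {Ω : ι → Type*} {m : ∀ i, MeasurableSpace (Ω i)}
  {μ : ∀ i, Measure (Ω i)} [∀ i, IsProbabilityMeasure (μ i)]
  {m' : MeasurableSpace Ω'} {μ' : Measure Ω'} [IsProbabilityMeasure μ'] {l : Filter ι}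

lemma tendstoInDistribution_of_forall_integral_tendsto {E : Type*} [TopologicalSpace E]
    [MeasurableSpace E] [OpensMeasurableSpace E] {Z : ∀ i, Ω i → E} {Z' : Ω' → E}
    (hZ : ∀ i, AEMeasurable (Z i) (μ i)) (hZ' : AEMeasurable Z' μ')
    (h : ∀ f : E →ᵇ ℝ, Tendsto (fun i => ∫ ω, f (Z i ω) ∂μ i) l (𝓝 (∫ ω, f (Z' ω) ∂μ'))) :
    TendstoInDistribution Z l Z' μ μ' where
  forall_aemeasurable := hZ
  aemeasurable_limit := hZ'
  tendsto := by
    refine ProbabilityMeasure.tendsto_iff_forall_integral_tendsto.2 fun f => ?_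
    simp only [ProbabilityMeasure.coe_mk]
    rw [integral_map hZ' f.continuous.aestronglyMeasurable]
    simpa only [integral_map (hZ _) f.continuous.aestronglyMeasurable] using h f

lemma TendstoInDistribution.measure_lt_le {α : Type*} [LinearOrder α] [TopologicalSpace α]
    [OrderTopology α] [DenselyOrdered α] [NoMaxOrder α] [FirstCountableTopology α]
    [MeasurableSpace α] [OpensMeasurableSpace α] [HasOuterApproxClosed α] [l.NeBot]
    {U V : ∀ i, Ω i → α} {U' V' : Ω' → α}
    (hU : TendstoInDistribution U l U' μ μ') (hV : TendstoInDistribution V l V' μ μ')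
    (h : ∀ t, ∀ᶠ i in l, μ i {ω | t < U i ω} ≤ μ i {ω | t < V i ω}) (t : α) :
    μ' {ω | t < U' ω} ≤ μ' {ω | t < V' ω} := by
  have := ProbabilityMeasure.measure_Ioi_le_of_tendsto hU.tendsto hV.tendsto (fun s => ?_) t
  · rwa [ProbabilityMeasure.coe_mk, ProbabilityMeasure.coe_mk,
      Measure.map_apply_of_aemeasurable hU.aemeasurable_limit measurableSet_Ioi,
      Measure.map_apply_of_aemeasurable hV.aemeasurable_limit measurableSet_Ioi] at this
  · filter_upwards [h s] with i hi
    rwa [ProbabilityMeasure.coe_mk, ProbabilityMeasure.coe_mk,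
      Measure.map_apply_of_aemeasurable (hU.forall_aemeasurable i) measurableSet_Ioi,
      Measure.map_apply_of_aemeasurable (hV.forall_aemeasurable i) measurableSet_Ioi]

end Distribution

end MeasureTheory

/-- Preservation under convergence in distribution: if `(Xₙ, Yₙ)` converges in
distribution to `(X, Y)` and `Xₙ ≤_{st:wj} Yₙ` for all `n`, then
`X ≤_{st:wj} Y`. -/
theorem stwj_of_tendsto_in_distribution {Ω : Type*} [MeasurableSpace Ω]
    (μ : Measure Ω) [IsProbabilityMeasure μ]
    (X Y : Ω → ℝ) (Xs Ys : ℕ → Ω → ℝ)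
    (hXm : Measurable X) (hYm : Measurable Y)
    (hXsm : ∀ n, Measurable (Xs n)) (hYsm : ∀ n, Measurable (Ys n))
    (hconv : ∀ f : BoundedContinuousFunction (ℝ × ℝ) ℝ,
      Tendsto (fun n => ∫ ω, f (Xs n ω, Ys n ω) ∂μ) atTop
        (nhds (∫ ω, f (X ω, Y ω) ∂μ)))
    (h : ∀ n, ∀ t : ℝ, μ {ω | Xs n ω - Ys n ω > t} ≤ μ {ω | Ys n ω - Xs n ω > t}) :
    ∀ t : ℝ, μ {ω | X ω - Y ω > t} ≤ μ {ω | Y ω - X ω > t} := by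
  have hpair : TendstoInDistribution (fun n ω => (Xs n ω, Ys n ω)) atTop (fun ω => (X ω, Y ω))
      (fun _ => μ) μ :=
    tendstoInDistribution_of_forall_integral_tendsto
      (fun n => ((hXsm n).prodMk (hYsm n)).aemeasurable) (hXm.prodMk hYm).aemeasurable hconv
  exact (hpair.continuous_comp continuous_sub).measure_lt_le
    (hpair.continuous_comp (continuous_snd.sub continuous_fst))
    (fun t => Eventually.of_forall fun n => h n t)
end

section
/- Let (X,Y) be a bivariate random vector with X ≤_{st:wj} Y, Z a random variable, and 0 ≤ α < 1. Define portfolios P₁ = (1-α)X + αZ and P₂ = (1-α)Y + αZ. Then P₁ ≤_{st:wj} P₂. -/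
open MeasureTheory ProbabilityTheory

/-- Replacing an asset by a larger one (in the `st:wj` sense): if `X ≤_{st:wj} Y`
and `0 ≤ α < 1`, then `P₁ = (1-α)X + αZ ≤_{st:wj} P₂ = (1-α)Y + αZ`. -/
theorem portfolio_replace_stwj {Ω : Type*} [MeasurableSpace Ω] (μ : Measure Ω)
    [IsProbabilityMeasure μ] (X Y Z : Ω → ℝ) (α : ℝ) (hα0 : 0 ≤ α) (hα1 : α < 1)
    (h : ∀ t : ℝ, μ {ω | X ω - Y ω > t} ≤ μ {ω | Y ω - X ω > t}) :
    ∀ t : ℝ,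
      μ {ω | ((1 - α) * X ω + α * Z ω) - ((1 - α) * Y ω + α * Z ω) > t} ≤
        μ {ω | ((1 - α) * Y ω + α * Z ω) - ((1 - α) * X ω + α * Z ω) > t} := by
  intro t
  have h1 : (0:ℝ) < 1 - α := by linarith
  have e1 : {ω | ((1 - α) * X ω + α * Z ω) - ((1 - α) * Y ω + α * Z ω) > t}
      = {ω | X ω - Y ω > t / (1 - α)} := by
    ext ω
    simp only [Set.mem_setOf_eq]
    rw [gt_iff_lt, gt_iff_lt, div_lt_iff₀ h1]
    constructor <;> intro hh <;> nlinarith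
  have e2 : {ω | ((1 - α) * Y ω + α * Z ω) - ((1 - α) * X ω + α * Z ω) > t}
      = {ω | Y ω - X ω > t / (1 - α)} := by
    ext ω
    simp only [Set.mem_setOf_eq]
    rw [gt_iff_lt, gt_iff_lt, div_lt_iff₀ h1]
    constructor <;> intro hh <;> nlinarith
  rw [e1, e2]
  exact h _
end

section
/- Let (X,Y) be a bivariate random vector with X ≤_{st:wj} Y, and let 0 ≤ α₁ < α₂ ≤ 1. Define P₁ = (1-α₁)X + α₁Y and P₂ = (1-α₂)X + α₂Y. Then P₁ ≤_{st:wj} P₂. -/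
open MeasureTheory ProbabilityTheory

/-- More weight on the larger asset gives a larger portfolio: if `X ≤_{st:wj} Y`
and `0 ≤ α₁ < α₂ ≤ 1`, then `(1-α₁)X + α₁Y ≤_{st:wj} (1-α₂)X + α₂Y`. -/
theorem portfolio_weight_stwj {Ω : Type*} [MeasurableSpace Ω] (μ : Measure Ω)
    [IsProbabilityMeasure μ] (X Y : Ω → ℝ) (α₁ α₂ : ℝ)
    (h0 : 0 ≤ α₁) (h12 : α₁ < α₂) (h1 : α₂ ≤ 1)
    (h : ∀ t : ℝ, μ {ω | X ω - Y ω > t} ≤ μ {ω | Y ω - X ω > t}) :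
    ∀ t : ℝ,
      μ {ω | ((1 - α₁) * X ω + α₁ * Y ω) - ((1 - α₂) * X ω + α₂ * Y ω) > t} ≤
        μ {ω | ((1 - α₂) * X ω + α₂ * Y ω) - ((1 - α₁) * X ω + α₁ * Y ω) > t} := by
  intro t
  have hc : 0 < α₂ - α₁ := sub_pos.mpr h12
  have e1 : {ω | ((1 - α₁) * X ω + α₁ * Y ω) - ((1 - α₂) * X ω + α₂ * Y ω) > t}
      = {ω | X ω - Y ω > t / (α₂ - α₁)} := by
    ext ω
    simp only [Set.mem_setOf_eq, gt_iff_lt, div_lt_iff₀ hc]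
    constructor <;> intro hh <;> nlinarith
  have e2 : {ω | ((1 - α₂) * X ω + α₂ * Y ω) - ((1 - α₁) * X ω + α₁ * Y ω) > t}
      = {ω | Y ω - X ω > t / (α₂ - α₁)} := by
    ext ω
    simp only [Set.mem_setOf_eq, gt_iff_lt, div_lt_iff₀ hc]
    constructor <;> intro hh <;> nlinarith
  rw [e1, e2]
  exact h _
end
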